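/- arXiv:2304.01284 — 6 statements merged into one kernel-verified Lean document; each statement's English description precedes it below -/
import Mathlib

section
/- The least fixed point of the expectation-transformer functional for the procedure balls applied to the identity post-expectation yields the expected return value n/5: the least function T : ℕ → (ℕ → ℝ≥0∞) → ℝ≥0∞ satisfying T n f = (1/5)·T (n-1) (λ b, f (b+1)) + (4/5)·T (n-1) f for n > 0, and T 0 f = f 0, satisfies T n (λ b, b) = n/5 for all n. -/
open ENNReal

/-- The offset `c` is generalized because the `f (b+1)` branch turns offset `c` into `c + 1`. -/
theorem expectation_id_add_const_of_rec {p q : ℝ≥0∞} (hpq : p + q = 1)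
    (T : ℕ → (ℕ → ℝ≥0∞) → ℝ≥0∞)
    (hrec : ∀ n f, 0 < n → T n f = p * T (n-1) (fun b => f (b+1)) + q * T (n-1) f)
    (hzero : ∀ f, T 0 f = f 0) (n : ℕ) (c : ℝ≥0∞) :
    T n (fun b => (b : ℝ≥0∞) + c) = n * p + c := by
  induction n generalizing c with
  | zero => simp [hzero]
  | succ n ih =>
    have hshift : (fun b : ℕ => ((b + 1 : ℕ) : ℝ≥0∞) + c) = fun b : ℕ => (b : ℝ≥0∞) + (c + 1) := by
      funext b; push_cast; ring
    rw [hrec _ _ n.succ_pos, Nat.succ_sub_one, hshift, ih, ih]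
    calc p * (n * p + (c + 1)) + q * (n * p + c)
        = (p + q) * (n * p + c) + p := by ring
      _ = (n + 1 : ℕ) * p + c := by rw [hpq]; push_cast; ring

theorem one_fifth_add_four_fifths : (1 / 5 : ℝ≥0∞) + 4 / 5 = 1 := by
  rw [ENNReal.div_add_div_same, show (1 + 4 : ℝ≥0∞) = 5 by norm_num]
  exact ENNReal.div_self (by norm_num) (by norm_num)

theorem stmt_5_general (T : ℕ → (ℕ → ℝ≥0∞) → ℝ≥0∞)
    (hrec : ∀ n f, 0 < n →
      T n f = (1/5) * T (n-1) (fun b => f (b+1)) + (4/5) * T (n-1) f)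
    (hzero : ∀ f, T 0 f = f 0) :
    ∀ n : ℕ, T n (fun b => (b : ℝ≥0∞)) = n / 5 := by
  intro n
  simpa [div_eq_mul_inv] using
    expectation_id_add_const_of_rec one_fifth_add_four_fifths T hrec hzero n 0

theorem stmt_5 (T : ℕ → (ℕ → ℝ≥0∞) → ℝ≥0∞)
    (hrec : ∀ n f, 0 < n →
      T n f = (1/5) * T (n-1) (fun b => f (b+1)) + (4/5) * T (n-1) f)
    (hzero : ∀ f, T 0 f = f 0)
    (hleast : ∀ T' : ℕ → (ℕ → ℝ≥0∞) → ℝ≥0∞,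
      (∀ n f, 0 < n →
        T' n f = (1/5) * T' (n-1) (fun b => f (b+1)) + (4/5) * T' (n-1) f) →
      (∀ f, T' 0 f = f 0) → ∀ n f, T n f ≤ T' n f) :
    ∀ n : ℕ, T n (fun b => (b : ℝ≥0∞)) = n / 5 :=
  stmt_5_general T hrec hzero
end

section
/- Binomial update invariant: the least function W : ℕ × ℕ × ℕ → ℝ≥0∞ satisfying W (x, n, N) = (1/2)·W (x+1, n+1, N) + (1/2)·W (x, n+1, N) when n < N, and W (x, n, N) = x when n ≥ N, satisfies W (0, 0, N) = N/2 for all N. -/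
/-! Each remaining iteration adds `1/2` to the expected value, so by induction on the number `k`
of remaining iterations, `W (x, n, n + k) = x + k / 2`. -/

open ENNReal

theorem ENNReal.half_mul_add_one_add_half_mul (a : ℝ≥0∞) :
    1 / 2 * (a + 1) + 1 / 2 * a = a + 1 / 2 := by
  rw [mul_add, mul_one, add_right_comm, ← add_mul, ENNReal.add_halves, one_mul]

theorem apply_eq_add_div_two_of_recursion {W : ℕ × ℕ × ℕ → ℝ≥0∞}
    (hrec : ∀ x n N : ℕ, n < N →
      W (x, n, N) = (1/2) * W (x+1, n+1, N) + (1/2) * W (x, n+1, N))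
    (hend : ∀ x n N : ℕ, N ≤ n → W (x, n, N) = (x : ℝ≥0∞)) (k : ℕ) :
    ∀ x n : ℕ, W (x, n, n + k) = x + k / 2 := by
  induction k with
  | zero => intro x n; simp [hend x n n le_rfl]
  | succ k ih =>
    intro x n
    rw [hrec x n _ (by omega), show n + (k + 1) = n + 1 + k by omega, ih, ih,
      Nat.cast_succ, Nat.cast_succ, add_right_comm, ENNReal.half_mul_add_one_add_half_mul,
      ENNReal.add_div, add_assoc]

theorem stmt_9_general (W : ℕ × ℕ × ℕ → ℝ≥0∞)
    (hrec : ∀ x n N : ℕ, n < N →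
      W (x, n, N) = (1/2) * W (x+1, n+1, N) + (1/2) * W (x, n+1, N))
    (hend : ∀ x n N : ℕ, N ≤ n → W (x, n, N) = (x : ℝ≥0∞)) :
    ∀ N : ℕ, W (0, 0, N) = N / 2 := by
  intro N
  simpa using apply_eq_add_div_two_of_recursion hrec hend N 0 0

theorem stmt_9 (W : ℕ × ℕ × ℕ → ℝ≥0∞)
    (hrec : ∀ x n N : ℕ, n < N →
      W (x, n, N) = (1/2) * W (x+1, n+1, N) + (1/2) * W (x, n+1, N))
    (hend : ∀ x n N : ℕ, N ≤ n → W (x, n, N) = (x : ℝ≥0∞))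
    (hleast : ∀ W' : ℕ × ℕ × ℕ → ℝ≥0∞,
      (∀ x n N : ℕ, n < N →
        W' (x, n, N) = (1/2) * W' (x+1, n+1, N) + (1/2) * W' (x, n+1, N)) →
      (∀ x n N : ℕ, N ≤ n → W' (x, n, N) = (x : ℝ≥0∞)) → W ≤ W') :
    ∀ N : ℕ, W (0, 0, N) = N / 2 :=
  stmt_9_general W hrec hend
end

section
/- Hire-assistant expected number of hires: the least function T : ℕ → (ℕ → ℝ≥0∞) → ℝ≥0∞ satisfying T n f = T (n-1) (λ h, (1/n)·f (h+1) + (1 - 1/n)·f h) for n > 0 and T 0 f = f 0, satisfies T n (λ h, h) = ∑_{k=1}^{n} 1/k, the n-th harmonic number. -/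
/-!
One step of the recursion maps the shifted identity `h ↦ h + c` to `h ↦ h + (c + 1/n)`,
since a Bernoulli(1/n) increment adds exactly `1/n` in expectation. Unrolling the recursion
from `n` down to `0` therefore accumulates the harmonic sum `∑_{k=1}^n 1/k` in the shift.
-/

open ENNReal

theorem ENNReal.mul_add_one_add_tsub_mul {p : ℝ≥0∞} (hp : p ≤ 1) (y : ℝ≥0∞) :
    p * (y + 1) + (1 - p) * y = y + p := by
  calc p * (y + 1) + (1 - p) * y = (p + (1 - p)) * y + p := by ring
    _ = y + p := by rw [add_tsub_cancel_of_le hp, one_mul]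

section HireRecursion

variable (T : ℕ → (ℕ → ℝ≥0∞) → ℝ≥0∞)
    (hrec : ∀ n f, 0 < n →
      T n f = T (n-1) (fun h => (1/(n : ℝ≥0∞)) * f (h+1) + (1 - 1/(n : ℝ≥0∞)) * f h))
    (hzero : ∀ f, T 0 f = f 0)

include hrec hzero in
theorem apply_id_add_eq_add_harmonic (n : ℕ) (c : ℝ≥0∞) :
    T n (fun h => (h : ℝ≥0∞) + c) = c + ∑ k ∈ Finset.Icc 1 n, 1 / (k : ℝ≥0∞) := by
  induction n generalizing c with
  | zero => simp [hzero]
  | succ n ih =>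
    have hp : 1 / ((n + 1 : ℕ) : ℝ≥0∞) ≤ 1 := by simp
    have hstep : (fun h : ℕ => 1 / ((n + 1 : ℕ) : ℝ≥0∞) * (((h + 1 : ℕ) : ℝ≥0∞) + c)
        + (1 - 1 / ((n + 1 : ℕ) : ℝ≥0∞)) * ((h : ℝ≥0∞) + c))
        = fun h : ℕ => (h : ℝ≥0∞) + (c + 1 / ((n + 1 : ℕ) : ℝ≥0∞)) := by
      funext h
      rw [Nat.cast_succ h, add_right_comm, ENNReal.mul_add_one_add_tsub_mul hp, add_assoc]
    rw [hrec (n + 1) _ n.succ_pos, Nat.add_sub_cancel, hstep, ih,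
      Finset.sum_Icc_succ_top (by omega), add_assoc, add_comm (1 / _)]

end HireRecursion

theorem stmt_15_general (T : ℕ → (ℕ → ℝ≥0∞) → ℝ≥0∞)
    (hrec : ∀ n f, 0 < n →
      T n f = T (n-1) (fun h => (1/(n : ℝ≥0∞)) * f (h+1) + (1 - 1/(n : ℝ≥0∞)) * f h))
    (hzero : ∀ f, T 0 f = f 0) :
    ∀ n : ℕ, T n (fun h => (h : ℝ≥0∞)) = ∑ k ∈ Finset.Icc 1 n, 1 / (k : ℝ≥0∞) := by
  intro n
  simpa using apply_id_add_eq_add_harmonic T hrec hzero n 0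

theorem stmt_15 (T : ℕ → (ℕ → ℝ≥0∞) → ℝ≥0∞)
    (hrec : ∀ n f, 0 < n →
      T n f = T (n-1) (fun h => (1/(n : ℝ≥0∞)) * f (h+1) + (1 - 1/(n : ℝ≥0∞)) * f h))
    (hzero : ∀ f, T 0 f = f 0)
    (hleast : ∀ T' : ℕ → (ℕ → ℝ≥0∞) → ℝ≥0∞,
      (∀ n f, 0 < n →
        T' n f = T' (n-1) (fun h => (1/(n : ℝ≥0∞)) * f (h+1) + (1 - 1/(n : ℝ≥0∞)) * f h)) →
      (∀ f, T' 0 f = f 0) → ∀ n f, T n f ≤ T' n f) :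
    ∀ n : ℕ, T n (fun h => (h : ℝ≥0∞)) = ∑ k ∈ Finset.Icc 1 n, 1 / (k : ℝ≥0∞) :=
  stmt_15_general T hrec hzero
end

section
/- The hire-assistant expectation is linearly bounded: with T as the least solution of T n f = T (n-1) (λ h, (1/n)·f(h+1) + (1-1/n)·f h) for n > 0 and T 0 f = f 0, for all n ∈ ℕ and r ∈ ℝ≥0 we have T n (λ h, h + r) ≤ n + r; in particular T n (λ h, h) ≤ n. -/
open ENNReal Finset

theorem ENNReal.mul_add_one_add_tsub_mul_s16 {a : ℝ≥0∞} (ha : a ≤ 1) (x : ℝ≥0∞) :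
    a * (x + 1) + (1 - a) * x = x + a := by
  rw [mul_add, mul_one, add_right_comm, ← add_mul, add_tsub_cancel_of_le ha, one_mul]

theorem ENNReal.sum_range_inv_succ_le (n : ℕ) :
    ∑ k ∈ range n, ((k + 1 : ℕ) : ℝ≥0∞)⁻¹ ≤ n := by
  simpa using sum_le_card_nsmul (range n) (fun k => ((k + 1 : ℕ) : ℝ≥0∞)⁻¹) 1 fun k _ =>
    ENNReal.inv_le_one.mpr (Nat.one_le_cast.mpr k.succ_pos)

theorem hire_apply_add_eq_add_harmonic {T : ℕ → (ℕ → ℝ≥0∞) → ℝ≥0∞}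
    (hrec : ∀ n f, 0 < n →
      T n f = T (n-1) (fun h => (1/(n : ℝ≥0∞)) * f (h+1) + (1 - 1/(n : ℝ≥0∞)) * f h))
    (hzero : ∀ f, T 0 f = f 0) (n : ℕ) (c : ℝ≥0∞) :
    T n (fun h => (h : ℝ≥0∞) + c) = c + ∑ k ∈ range n, ((k + 1 : ℕ) : ℝ≥0∞)⁻¹ := by
  induction n generalizing c with
  | zero => simp [hzero]
  | succ n ih =>
    have hp : ((n + 1 : ℕ) : ℝ≥0∞)⁻¹ ≤ 1 := ENNReal.inv_le_one.mpr (Nat.one_le_cast.mpr n.succ_pos)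
    have hstep : (fun h : ℕ => 1 / ((n + 1 : ℕ) : ℝ≥0∞) * ((h + 1 : ℕ) + c)
        + (1 - 1 / ((n + 1 : ℕ) : ℝ≥0∞)) * (h + c))
        = fun h : ℕ => (h : ℝ≥0∞) + (c + ((n + 1 : ℕ) : ℝ≥0∞)⁻¹) := by
      funext h
      rw [one_div, Nat.cast_succ h, add_right_comm, mul_add_one_add_tsub_mul_s16 hp, add_assoc]
    rw [hrec (n + 1) _ n.succ_pos, Nat.add_sub_cancel, hstep, ih, sum_range_succ]
    ring

theorem stmt_16_general (T : ℕ → (ℕ → ℝ≥0∞) → ℝ≥0∞)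
    (hrec : ∀ n f, 0 < n →
      T n f = T (n-1) (fun h => (1/(n : ℝ≥0∞)) * f (h+1) + (1 - 1/(n : ℝ≥0∞)) * f h))
    (hzero : ∀ f, T 0 f = f 0) :
    (∀ (n : ℕ) (r : NNReal), T n (fun h => (h : ℝ≥0∞) + r) ≤ (n : ℝ≥0∞) + r) ∧
      ∀ n : ℕ, T n (fun h => (h : ℝ≥0∞)) ≤ (n : ℝ≥0∞) := by
  have hbound (n : ℕ) (c : ℝ≥0∞) : T n (fun h => (h : ℝ≥0∞) + c) ≤ n + c := by
    rw [hire_apply_add_eq_add_harmonic hrec hzero, add_comm (n : ℝ≥0∞)]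
    gcongr
    exact sum_range_inv_succ_le n
  exact ⟨fun n r => hbound n r, fun n => by simpa using hbound n 0⟩

theorem stmt_16 (T : ℕ → (ℕ → ℝ≥0∞) → ℝ≥0∞)
    (hrec : ∀ n f, 0 < n →
      T n f = T (n-1) (fun h => (1/(n : ℝ≥0∞)) * f (h+1) + (1 - 1/(n : ℝ≥0∞)) * f h))
    (hzero : ∀ f, T 0 f = f 0)
    (hleast : ∀ T' : ℕ → (ℕ → ℝ≥0∞) → ℝ≥0∞,
      (∀ n f, 0 < n →
        T' n f = T' (n-1) (fun h => (1/(n : ℝ≥0∞)) * f (h+1) + (1 - 1/(n : ℝ≥0∞)) * f h)) →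
      (∀ f, T' 0 f = f 0) → ∀ n f, T n f ≤ T' n f) :
    (∀ (n : ℕ) (r : NNReal), T n (fun h => (h : ℝ≥0∞) + r) ≤ (n : ℝ≥0∞) + r) ∧
      ∀ n : ℕ, T n (fun h => (h : ℝ≥0∞)) ≤ (n : ℝ≥0∞) :=
  stmt_16_general T hrec hzero
end

section
/- Linearity of the loop expectation transformer for nonnegative scalars: let Φ be a linear ω-continuous operator on σ → ℝ≥0∞ (Φ (c·f + d·g) = c·Φ f + d·Φ g). Then the loop transformer W g = lfp (G ↦ λ s, if b s then Φ G s else g s) satisfies W (c·g₁ + d·g₂) = c·W g₁ + d·W g₂ for all c, d ∈ ℝ≥0 and g₁, g₂ : σ → ℝ≥0∞. -/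
/-!
The loop transformer `W g` is the least fixed point of the ω-continuous functional
`G ↦ fun s => if b s then Φ G s else g s`, so by Kleene's theorem it is the supremum of the
iterates of that functional from `⊥`. Linearity of `Φ` makes each iterate for `c • g₁ + d • g₂`
the corresponding combination of the iterates for `g₁` and `g₂`, and in `ℝ≥0∞` suprema of
increasing sequences commute with scalar multiplication and addition.
-/

open ENNReal OmegaCompletePartialOrder

theorem monotone_of_map_add {α β : Type*} [AddCommMonoid α] [PartialOrder α] [ExistsAddOfLE α]
    [AddCommMonoid β] [PartialOrder β] [CanonicallyOrderedAdd β] {Φ : α → β}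
    (hadd : ∀ f g, Φ (f + g) = Φ f + Φ g) : Monotone Φ := by
  intro f g hfg
  obtain ⟨k, rfl⟩ := exists_add_of_le hfg
  rw [hadd]
  exact le_self_add

theorem ωScottContinuous_of_map_iSup {α β : Type*} [CompleteLattice α] [CompleteLattice β]
    {f : α → β} (hf : Monotone f)
    (hsup : ∀ c : ℕ → α, Monotone c → f (⨆ n, c n) = ⨆ n, f (c n)) : ωScottContinuous f :=
  ωScottContinuous.of_monotone_map_ωSup ⟨hf, fun c => hsup c c.monotone⟩

theorem ENNReal.iSup_mul_add_mul_of_monotone {u v : ℕ → ℝ≥0∞} (hu : Monotone u)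
    (hv : Monotone v) (c d : ℝ≥0∞) :
    ⨆ n, (c * u n + d * v n) = c * (⨆ n, u n) + d * ⨆ n, v n := by
  rw [ENNReal.mul_iSup, ENNReal.mul_iSup, ENNReal.iSup_add_iSup_of_monotone
    (fun _ _ h => mul_le_mul_right (hu h) c) (fun _ _ h => mul_le_mul_right (hv h) d)]

section LoopStep

variable {σ β : Type*} (b : σ → Bool)

/-- The functional whose least fixed point is `while b do body`, where `Φ` is the expectation
transformer of `body` and `g` the post-expectation. -/
def loopStep (Φ : (σ → β) → σ → β) (g G : σ → β) : σ → β :=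
  fun s => if b s then Φ G s else g s

variable [CompleteLattice β] {Φ : (σ → β) → σ → β}

theorem loopStep_mono (hΦ : Monotone Φ) (g : σ → β) : Monotone (loopStep b Φ g) := by
  intro G₁ G₂ h s
  unfold loopStep
  split
  · exact hΦ h s
  · exact le_rfl

theorem loopStep_map_iSup (hΦ : ∀ c : ℕ → σ → β, Monotone c → Φ (⨆ n, c n) = ⨆ n, Φ (c n))
    (g : σ → β) {c : ℕ → σ → β} (hc : Monotone c) :
    loopStep b Φ g (⨆ n, c n) = ⨆ n, loopStep b Φ g (c n) := by
  funext s
  simp only [loopStep, iSup_apply]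
  split
  · rw [hΦ c hc, iSup_apply]
  · exact iSup_const.symm

theorem eq_iSup_iterate_loopStep_of_isLeast (hΦ : Monotone Φ)
    (hsup : ∀ c : ℕ → σ → β, Monotone c → Φ (⨆ n, c n) = ⨆ n, Φ (c n)) {g W : σ → β}
    (hW : IsLeast {G | G = loopStep b Φ g G} W) : W = ⨆ n, (loopStep b Φ g)^[n] ⊥ := by
  let F : (σ → β) →o (σ → β) := ⟨loopStep b Φ g, loopStep_mono b hΦ g⟩
  rw [le_antisymm (hW.2 F.map_lfp.symm) (F.lfp_le_fixed hW.1.symm)]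
  exact fixedPoints.lfp_eq_sSup_iterate F
    (ωScottContinuous_of_map_iSup F.monotone fun _ => loopStep_map_iSup b hsup g)

end LoopStep

theorem iterate_loopStep_linear {σ : Type*} (b : σ → Bool) {Φ : (σ → ℝ≥0∞) → σ → ℝ≥0∞}
    (hlin : ∀ (c d : NNReal) (f g : σ → ℝ≥0∞),
      Φ (fun s => (c : ℝ≥0∞) * f s + (d : ℝ≥0∞) * g s)
        = fun s => (c : ℝ≥0∞) * Φ f s + (d : ℝ≥0∞) * Φ g s)
    (c d : NNReal) (g₁ g₂ : σ → ℝ≥0∞) (n : ℕ) :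
    (loopStep b Φ fun s => (c : ℝ≥0∞) * g₁ s + (d : ℝ≥0∞) * g₂ s)^[n] ⊥
      = fun s =>
          (c : ℝ≥0∞) * (loopStep b Φ g₁)^[n] ⊥ s + (d : ℝ≥0∞) * (loopStep b Φ g₂)^[n] ⊥ s := by
  induction n with
  | zero => funext s; simp
  | succ n ih =>
    simp only [Function.iterate_succ_apply', ih]
    funext s
    unfold loopStep
    split
    · rw [hlin]
    · rfl

theorem stmt_18 {σ : Type*} (b : σ → Bool)
    (Φ : (σ → ℝ≥0∞) → (σ → ℝ≥0∞))
    (hc : ∀ g : ℕ → σ → ℝ≥0∞, Monotone g →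
      Φ (fun s => ⨆ n, g n s) = fun s => ⨆ n, Φ (g n) s)
    (hlin : ∀ (c d : NNReal) (f g : σ → ℝ≥0∞),
      Φ (fun s => (c : ℝ≥0∞) * f s + (d : ℝ≥0∞) * g s)
        = fun s => (c : ℝ≥0∞) * Φ f s + (d : ℝ≥0∞) * Φ g s)
    (W : (σ → ℝ≥0∞) → (σ → ℝ≥0∞))
    (hW : ∀ g, IsLeast {G : σ → ℝ≥0∞ | G = fun s => if b s then Φ G s else g s} (W g)) :
    ∀ (c d : NNReal) (g₁ g₂ : σ → ℝ≥0∞),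
      W (fun s => (c : ℝ≥0∞) * g₁ s + (d : ℝ≥0∞) * g₂ s)
        = fun s => (c : ℝ≥0∞) * W g₁ s + (d : ℝ≥0∞) * W g₂ s := by
  have hmono : Monotone Φ :=
    monotone_of_map_add fun f g => by simpa [Pi.add_def] using hlin 1 1 f g
  have hsup : ∀ g : ℕ → σ → ℝ≥0∞, Monotone g → Φ (⨆ n, g n) = ⨆ n, Φ (g n) := fun g hg => by
    simpa only [← iSup_apply] using hc g hg
  have hW_iSup (g : σ → ℝ≥0∞) : W g = ⨆ n, (loopStep b Φ g)^[n] ⊥ :=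
    eq_iSup_iterate_loopStep_of_isLeast b hmono hsup (hW g)
  have hiter_mono (g : σ → ℝ≥0∞) (s : σ) : Monotone fun n => (loopStep b Φ g)^[n] ⊥ s :=
    fun _ _ h => (loopStep_mono b hmono g).monotone_iterate_of_le_map bot_le h s
  intro c d g₁ g₂
  funext s
  simp only [hW_iSup, iterate_loopStep_linear b hlin, iSup_apply]
  exact ENNReal.iSup_mul_add_mul_of_monotone (hiter_mono g₁ s) (hiter_mono g₂ s) _ _
end

section
/- Random walk expectation: the least function T : ℤ → ℝ≥0∞ satisfying T n = 1 + (1/2)·T (n-2) + (1/2)·T (n+1) for n > 1, and T n = 0 for n ≤ 1, satisfies T n ≤ 2·max(n,0) for all n ∈ ℤ, i.e., the expected return value of rdwalk(n) is at most 2n. -/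
open ENNReal

/-
The recurrence is linear with characteristic polynomial x³ - 2x² + 1 = (x - 1)(x² - x - 1) and
particular solution 2n, so g n = 2n + 2ψ - 2ψⁿ⁺¹, with ψ the conjugate of the golden ratio, solves it
exactly and vanishes at n = 0 and n = 1. Since |ψ| < 1, 0 ≤ g n ≤ 2n for n ≥ 0, and the least
solution T lies below the solution equal to g on n ≥ 0 and to 0 elsewhere.
-/

open Real goldenRatio

lemma abs_goldenConj_le_one : |ψ| ≤ 1 := by
  rw [abs_of_neg goldenConj_neg]
  linarith [neg_one_lt_goldenConj]

lemma abs_goldenConj_pow_le {m n : ℕ} (h : m ≤ n) : |ψ ^ n| ≤ |ψ| ^ m := by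
  rw [abs_pow]
  exact pow_le_pow_of_le_one (abs_nonneg _) abs_goldenConj_le_one h

noncomputable def rdwalkSol (k : ℕ) : ℝ := 2 * k + 2 * ψ - 2 * ψ ^ (k + 1)

lemma rdwalkSol_zero : rdwalkSol 0 = 0 := by simp [rdwalkSol]

lemma rdwalkSol_one : rdwalkSol 1 = 0 := by
  simp only [rdwalkSol]
  linear_combination (-2) * goldenConj_sq

lemma rdwalkSol_add_two (k : ℕ) :
    rdwalkSol (k + 2) = 1 + 1 / 2 * rdwalkSol k + 1 / 2 * rdwalkSol (k + 3) := by
  simp only [rdwalkSol]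
  push_cast
  linear_combination (ψ - 1) * ψ ^ (k + 1) * goldenConj_sq

lemma rdwalkSol_nonneg (k : ℕ) : 0 ≤ rdwalkSol k := by
  rcases k with _ | j
  · rw [rdwalkSol_zero]
  · have hpow : ψ ^ (j + 2) ≤ ψ ^ 2 := by
      calc ψ ^ (j + 2) ≤ |ψ ^ (j + 2)| := le_abs_self _
        _ ≤ |ψ| ^ 2 := abs_goldenConj_pow_le (by omega)
        _ = ψ ^ 2 := sq_abs ψ
    simp only [rdwalkSol, Nat.cast_succ]
    nlinarith [goldenConj_sq, j.cast_nonneg (α := ℝ)]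

lemma rdwalkSol_le (k : ℕ) : rdwalkSol k ≤ 2 * k := by
  have hpow : -ψ ^ (k + 1) ≤ -ψ := by
    calc -ψ ^ (k + 1) ≤ |ψ ^ (k + 1)| := neg_le_abs _
      _ ≤ |ψ| ^ 1 := abs_goldenConj_pow_le (by omega)
      _ = -ψ := by rw [pow_one, abs_of_neg goldenConj_neg]
  simp only [rdwalkSol]
  linarith

lemma ofReal_one_add_half_mul_add_half_mul {a b : ℝ} (ha : 0 ≤ a) (hb : 0 ≤ b) :
    ENNReal.ofReal (1 + 1 / 2 * a + 1 / 2 * b)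
      = 1 + 1 / 2 * ENNReal.ofReal a + 1 / 2 * ENNReal.ofReal b := by
  have hhalf : ENNReal.ofReal (1 / 2) = 1 / 2 := by
    rw [ENNReal.ofReal_div_of_pos two_pos, ENNReal.ofReal_one, ENNReal.ofReal_ofNat]
  rw [ENNReal.ofReal_add (by positivity) (by positivity), ENNReal.ofReal_add zero_le_one (by positivity),
    ENNReal.ofReal_one, ENNReal.ofReal_mul (by norm_num), ENNReal.ofReal_mul (by norm_num), hhalf]

theorem stmt_19_general (T : ℤ → ℝ≥0∞)
    (hleast : ∀ T' : ℤ → ℝ≥0∞,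
      (∀ n : ℤ, 1 < n → T' n = 1 + (1/2) * T' (n-2) + (1/2) * T' (n+1)) →
      (∀ n : ℤ, n ≤ 1 → T' n = 0) → T ≤ T') :
    ∀ n : ℤ, T n ≤ 2 * (((max n 0).toNat : ℝ≥0∞)) := by
  set S : ℤ → ℝ≥0∞ := fun n => ENNReal.ofReal (rdwalkSol n.toNat)
  have hS_rec : ∀ n : ℤ, 1 < n → S n = 1 + (1/2) * S (n-2) + (1/2) * S (n+1) := by
    intro n hn
    obtain ⟨k, rfl⟩ : ∃ k : ℕ, n = k + 2 := ⟨(n - 2).toNat, by omega⟩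
    have h₀ : ((k : ℤ) + 2).toNat = k + 2 := by omega
    have h₁ : ((k : ℤ) + 2 - 2).toNat = k := by omega
    have h₂ : ((k : ℤ) + 2 + 1).toNat = k + 3 := by omega
    simp only [S, h₀, h₁, h₂]
    rw [rdwalkSol_add_two]
    exact ofReal_one_add_half_mul_add_half_mul (rdwalkSol_nonneg _) (rdwalkSol_nonneg _)
  have hS_base : ∀ n : ℤ, n ≤ 1 → S n = 0 := by
    intro n hn
    obtain h | h : n.toNat = 0 ∨ n.toNat = 1 := by omega
    all_goals simp [S, h, rdwalkSol_zero, rdwalkSol_one]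
  intro n
  calc T n ≤ S n := hleast S hS_rec hS_base n
    _ ≤ ENNReal.ofReal (2 * n.toNat) := ENNReal.ofReal_le_ofReal (rdwalkSol_le _)
    _ = 2 * (((max n 0).toNat : ℝ≥0∞)) := by
      rw [ENNReal.ofReal_mul zero_le_two, ENNReal.ofReal_ofNat, ENNReal.ofReal_natCast,
        show (max n 0).toNat = n.toNat by omega]

theorem stmt_19 (T : ℤ → ℝ≥0∞)
    (hrec : ∀ n : ℤ, 1 < n → T n = 1 + (1/2) * T (n-2) + (1/2) * T (n+1))
    (hbase : ∀ n : ℤ, n ≤ 1 → T n = 0)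
    (hleast : ∀ T' : ℤ → ℝ≥0∞,
      (∀ n : ℤ, 1 < n → T' n = 1 + (1/2) * T' (n-2) + (1/2) * T' (n+1)) →
      (∀ n : ℤ, n ≤ 1 → T' n = 0) → T ≤ T') :
    ∀ n : ℤ, T n ≤ 2 * (((max n 0).toNat : ℝ≥0∞)) :=
  stmt_19_general T hleast
end
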